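/- arXiv:1401.6097 — 2 statements merged into one kernel-verified Lean document; each statement's English description precedes it below -/
import Mathlib

section
/- Let (Wₙ, Vₙ) be the pair polarization process: W₀ = W, V₀ = V, and at each step the same sign (+ or −, each with probability 1/2, independently) is applied to both channels. Then the process Iₙ := I(Wₙ, Vₙ) is a martingale with respect to the natural filtration, provided I(W^s, V^s) > −∞ for all sign sequences s. -/
open Finset Real

noncomputable section

/-- Binary symmetric channel with crossover probability `α`: `BSC α x y = W(y|x)`. -/
def BSC (α : ℝ) : Bool → Bool → ℝ := fun x y => if y = x then 1 - α else α

/-- Arıkan's minus polar transform. -/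
def Wminus {Y : Type*} (W : Bool → Y → ℝ) : Bool → Y × Y → ℝ :=
  fun u₁ y => ∑ u₂ : Bool, (1/2) * W (u₁ ^^ u₂) y.1 * W u₂ y.2

/-- Arıkan's plus polar transform; output `(y₁, y₂, u₁)`. -/
def Wplus {Y : Type*} (W : Bool → Y → ℝ) : Bool → Y × Y × Bool → ℝ :=
  fun u₂ y => (1/2) * W (y.2.2 ^^ u₂) y.1 * W u₂ y.2.1

/-- Mismatched information functional `I(W, V)`. -/
def Ifun {Y : Type*} [Fintype Y] (W V : Bool → Y → ℝ) : ℝ :=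
  ∑ y : Y, ∑ x : Bool, (1/2) * W x y *
    Real.logb 2 (V x y / ((1/2) * V false y + (1/2) * V true y))

/-- Output alphabet after applying a sequence of polar transforms
(`true` = plus, `false` = minus, head applied first). -/
def polarType (Y : Type u) : List Bool → Type u
  | [] => Y
  | true :: s => polarType (Y × Y × Bool) s
  | false :: s => polarType (Y × Y) s

/-- The synthesized channel `W^s`. -/
def polarChan {Y : Type*} (W : Bool → Y → ℝ) : (s : List Bool) → Bool → polarType Y s → ℝ
  | [] => W
  | true :: s => polarChan (Wplus W) s
  | false :: s => polarChan (Wminus W) s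

instance polarFintype (Y : Type*) [Fintype Y] : ∀ s : List Bool, Fintype (polarType Y s)
  | [] => inferInstanceAs (Fintype Y)
  | true :: s => polarFintype (Y × Y × Bool) s
  | false :: s => polarFintype (Y × Y) s


/-!
Under the uniform input, `(W⁻, W⁺)` sees the inputs `(u₁ ⊕ u₂, u₂)` of `W ⊗ W`, an invertible
relabelling of `(x₁, x₂)`. With `q_V(y) = (V(y|0) + V(y|1)) / 2` (`outDist`) and
`i_V(x, y) = log (V(y|x) / q_V(y))` (`infoDensity`), the output laws factor as
`q_{V⁻}(y₁y₂) = q_V(y₁) q_V(y₂)` and `q_{V⁺}(y₁y₂u₁) = V⁻(y₁y₂|u₁) / 2`, so the densities telescope: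
`i_{V⁻}(u₁, y₁y₂) + i_{V⁺}(u₂, y₁y₂u₁) = i_V(x₁, y₁) + i_V(x₂, y₂)` wherever `W` puts mass, all
logarithms being finite there. Averaging against `W` gives `I(W⁻,V⁻) + I(W⁺,V⁺) = 2 I(W,V)`.
As `Iₙ` is a function of the first `n` fair coin tosses, that identity at `(W^s, V^s)` says exactly
`E[Iₙ₊₁ | 𝓕ₙ] = Iₙ`.
-/

section Channel

variable {Y : Type*}

def outDist (V : Bool → Y → ℝ) (y : Y) : ℝ := (1/2) * V false y + (1/2) * V true y

def infoDensity (V : Bool → Y → ℝ) (x : Bool) (y : Y) : ℝ := logb 2 (V x y / outDist V y)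

theorem Ifun_eq_sum_infoDensity [Fintype Y] (W V : Bool → Y → ℝ) :
    Ifun W V = ∑ y, ∑ x, (1/2) * W x y * infoDensity V x y := rfl

theorem outDist_pos {V : Bool → Y → ℝ} (hV : ∀ x y, 0 ≤ V x y) {x : Bool} {y : Y}
    (h : 0 < V x y) : 0 < outDist V y := by
  have := hV false y; have := hV true y
  cases x <;> simp only [outDist] <;> linarith

theorem outDist_Wminus (V : Bool → Y → ℝ) (y₁ y₂ : Y) :
    outDist (Wminus V) (y₁, y₂) = outDist V y₁ * outDist V y₂ := by
  simp only [outDist, Wminus, Fintype.sum_bool, Bool.xor_false, Bool.xor_true, Bool.not_false,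
    Bool.not_true]
  ring

theorem outDist_Wplus (V : Bool → Y → ℝ) (y₁ y₂ : Y) (u₁ : Bool) :
    outDist (Wplus V) (y₁, y₂, u₁) = (1/2) * Wminus V u₁ (y₁, y₂) := by
  simp only [outDist, Wplus, Wminus, Fintype.sum_bool]
  ring

theorem Wminus_nonneg {W : Bool → Y → ℝ} (hW : ∀ x y, 0 ≤ W x y) (x : Bool) (y : Y × Y) :
    0 ≤ Wminus W x y :=
  Finset.sum_nonneg fun _ _ => mul_nonneg (mul_nonneg one_half_pos.le (hW _ _)) (hW _ _)

theorem Wplus_nonneg {W : Bool → Y → ℝ} (hW : ∀ x y, 0 ≤ W x y) (x : Bool) (y : Y × Y × Bool) :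
    0 ≤ Wplus W x y :=
  mul_nonneg (mul_nonneg one_half_pos.le (hW _ _)) (hW _ _)

theorem half_mul_le_Wminus {W : Bool → Y → ℝ} (hW : ∀ x y, 0 ≤ W x y) (u₁ u₂ : Bool) (y₁ y₂ : Y) :
    (1/2) * W (u₁ ^^ u₂) y₁ * W u₂ y₂ ≤ Wminus W u₁ (y₁, y₂) :=
  Finset.single_le_sum (f := fun b => (1/2) * W (u₁ ^^ b) y₁ * W b y₂)
    (fun _ _ => mul_nonneg (mul_nonneg one_half_pos.le (hW _ _)) (hW _ _)) (Finset.mem_univ u₂)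

theorem infoDensity_Wminus_add_infoDensity_Wplus {V : Bool → Y → ℝ} (hV : ∀ x y, 0 ≤ V x y)
    {u₁ u₂ : Bool} {y₁ y₂ : Y} (h₁ : 0 < V (u₁ ^^ u₂) y₁) (h₂ : 0 < V u₂ y₂) :
    infoDensity (Wminus V) u₁ (y₁, y₂) + infoDensity (Wplus V) u₂ (y₁, y₂, u₁) =
      infoDensity V (u₁ ^^ u₂) y₁ + infoDensity V u₂ y₂ := by
  have hm : 0 < Wminus V u₁ (y₁, y₂) :=
    lt_of_lt_of_le (by positivity) (half_mul_le_Wminus hV u₁ u₂ y₁ y₂)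
  have hq₁ := outDist_pos hV h₁
  have hq₂ := outDist_pos hV h₂
  simp only [infoDensity, outDist_Wminus, outDist_Wplus, Wplus]
  rw [← logb_mul (by positivity) (by positivity), ← logb_mul (by positivity) (by positivity)]
  congr 1
  field_simp

theorem sum_mul_mul_add_eq {ι κ : Type*} [Fintype ι] [Fintype κ] (p f : κ → ι → ℝ) :
    ∑ i, ∑ i', ∑ k, ∑ k', p k i * p k' i' * (f k i + f k' i') =
      2 * (∑ i, ∑ k, p k i) * ∑ i, ∑ k, p k i * f k i := by
  have h : ∀ i i', ∑ k, ∑ k', p k i * p k' i' * (f k i + f k' i') =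
      (∑ k, p k i * f k i) * (∑ k', p k' i') + (∑ k, p k i) * (∑ k', p k' i' * f k' i') := by
    intro i i'
    simp only [Finset.sum_mul_sum, ← Finset.sum_add_distrib]
    exact Finset.sum_congr rfl fun k _ => Finset.sum_congr rfl fun k' _ => by ring
  simp only [h, Finset.sum_add_distrib, ← Finset.sum_mul_sum]
  ring

theorem sum_sum_xor {M : Type*} [AddCommMonoid M] (F : Bool → Bool → M) :
    ∑ u₁, ∑ u₂, F (u₁ ^^ u₂) u₂ = ∑ x₁, ∑ x₂, F x₁ x₂ := by
  simp only [Fintype.sum_bool, Bool.xor_false, Bool.xor_true, Bool.not_false, Bool.not_true]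
  abel

variable [Fintype Y]

theorem Ifun_Wminus (W V : Bool → Y → ℝ) :
    Ifun (Wminus W) (Wminus V) = ∑ y₁, ∑ y₂, ∑ u₁, ∑ u₂,
      (1/2) * W (u₁ ^^ u₂) y₁ * ((1/2) * W u₂ y₂) * infoDensity (Wminus V) u₁ (y₁, y₂) := by
  rw [Ifun_eq_sum_infoDensity, Fintype.sum_prod_type]
  simp only [Wminus, Finset.mul_sum, Finset.sum_mul]
  exact Finset.sum_congr rfl fun _ _ => Finset.sum_congr rfl fun _ _ =>
    Finset.sum_congr rfl fun _ _ => Finset.sum_congr rfl fun _ _ => by ring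

theorem Ifun_Wplus (W V : Bool → Y → ℝ) :
    Ifun (Wplus W) (Wplus V) = ∑ y₁, ∑ y₂, ∑ u₁, ∑ u₂,
      (1/2) * W (u₁ ^^ u₂) y₁ * ((1/2) * W u₂ y₂) * infoDensity (Wplus V) u₂ (y₁, y₂, u₁) := by
  simp only [Ifun_eq_sum_infoDensity, Fintype.sum_prod_type, Wplus]
  exact Finset.sum_congr rfl fun _ _ => Finset.sum_congr rfl fun _ _ =>
    Finset.sum_congr rfl fun _ _ => Finset.sum_congr rfl fun _ _ => by ring

theorem Ifun_Wminus_add_Ifun_Wplus {W V : Bool → Y → ℝ} (hW0 : ∀ x y, 0 ≤ W x y)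
    (hW1 : ∀ x, ∑ y, W x y = 1) (hV0 : ∀ x y, 0 ≤ V x y)
    (hpos : ∀ x y, 0 < W x y → 0 < V x y) :
    Ifun (Wminus W) (Wminus V) + Ifun (Wplus W) (Wplus V) = 2 * Ifun W V := by
  set p : Bool → Y → ℝ := fun x y => (1/2) * W x y
  have hchain : ∀ y₁ y₂ u₁ u₂, p (u₁ ^^ u₂) y₁ * p u₂ y₂ *
      (infoDensity (Wminus V) u₁ (y₁, y₂) + infoDensity (Wplus V) u₂ (y₁, y₂, u₁)) =
      p (u₁ ^^ u₂) y₁ * p u₂ y₂ * (infoDensity V (u₁ ^^ u₂) y₁ + infoDensity V u₂ y₂) := by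
    intro y₁ y₂ u₁ u₂
    rcases (hW0 (u₁ ^^ u₂) y₁).eq_or_lt with h₁ | h₁
    · simp [p, ← h₁]
    rcases (hW0 u₂ y₂).eq_or_lt with h₂ | h₂
    · simp [p, ← h₂]
    rw [infoDensity_Wminus_add_infoDensity_Wplus hV0 (hpos _ _ h₁) (hpos _ _ h₂)]
  have hp : ∑ y, ∑ x, p x y = 1 := by
    simp only [p, ← Finset.mul_sum]
    rw [Finset.sum_comm]
    simp [hW1]
  calc Ifun (Wminus W) (Wminus V) + Ifun (Wplus W) (Wplus V)
      = ∑ y₁, ∑ y₂, ∑ u₁, ∑ u₂, p (u₁ ^^ u₂) y₁ * p u₂ y₂ *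
          (infoDensity V (u₁ ^^ u₂) y₁ + infoDensity V u₂ y₂) := by
        simp only [Ifun_Wminus, Ifun_Wplus, ← Finset.sum_add_distrib, ← mul_add, ← hchain]
        rfl
    _ = ∑ y₁, ∑ y₂, ∑ x₁, ∑ x₂, p x₁ y₁ * p x₂ y₂ * (infoDensity V x₁ y₁ + infoDensity V x₂ y₂) := by
        refine Finset.sum_congr rfl fun y₁ _ => Finset.sum_congr rfl fun y₂ _ => ?_
        exact sum_sum_xor fun x₁ x₂ =>
          p x₁ y₁ * p x₂ y₂ * (infoDensity V x₁ y₁ + infoDensity V x₂ y₂)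
    _ = 2 * Ifun W V := by
        rw [sum_mul_mul_add_eq, hp, Ifun_eq_sum_infoDensity]
        ring

end Channel

section Polar
universe u

theorem sum_sum_half_mul_mul {Y : Type*} [Fintype Y] {W : Bool → Y → ℝ}
    (hW : ∀ x, ∑ y, W x y = 1) (a b : Bool) : ∑ y₁, ∑ y₂, (1/2) * W a y₁ * W b y₂ = 1/2 := by
  rw [← Finset.sum_mul_sum, ← Finset.mul_sum, hW, hW]
  norm_num

theorem Wminus_sum_eq_one {Y : Type*} [Fintype Y] {W : Bool → Y → ℝ} (hW : ∀ x, ∑ y, W x y = 1)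
    (u₁ : Bool) : ∑ y, Wminus W u₁ y = 1 := by
  simp only [Wminus, Fintype.sum_prod_type, Fintype.sum_bool, Finset.sum_add_distrib,
    sum_sum_half_mul_mul hW]
  norm_num

theorem Wplus_sum_eq_one {Y : Type*} [Fintype Y] {W : Bool → Y → ℝ} (hW : ∀ x, ∑ y, W x y = 1)
    (u₂ : Bool) : ∑ y, Wplus W u₂ y = 1 := by
  simp only [Wplus, Fintype.sum_prod_type, Fintype.sum_bool, Finset.sum_add_distrib,
    sum_sum_half_mul_mul hW]
  norm_num

theorem polarChan_nonneg : ∀ (s : List Bool) {Y : Type u} {W : Bool → Y → ℝ},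
    (∀ x y, 0 ≤ W x y) → ∀ x z, 0 ≤ polarChan W s x z
  | [], _, _, hW => hW
  | true :: s, _, _, hW => polarChan_nonneg s (Wplus_nonneg hW)
  | false :: s, _, _, hW => polarChan_nonneg s (Wminus_nonneg hW)

theorem polarChan_sum_eq_one : ∀ (s : List Bool) {Y : Type u} [Fintype Y] {W : Bool → Y → ℝ},
    (∀ x, ∑ y, W x y = 1) → ∀ x, ∑ z, polarChan W s x z = 1
  | [], _, _, _, hW => hW
  | true :: s, _, _, _, hW => polarChan_sum_eq_one s (Wplus_sum_eq_one hW)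
  | false :: s, _, _, _, hW => polarChan_sum_eq_one s (Wminus_sum_eq_one hW)

def polarInfo {Y : Type u} [Fintype Y] (W V : Bool → Y → ℝ) (s : List Bool) : ℝ :=
  Ifun (polarChan W s) (polarChan V s)

theorem polarInfo_append : ∀ (s t : List Bool) {Y : Type u} [Fintype Y] (W V : Bool → Y → ℝ),
    polarInfo W V (s ++ t) = polarInfo (polarChan W s) (polarChan V s) t
  | [], _, _, _, _, _ => rfl
  | true :: s, t, _, _, W, V => polarInfo_append s t (Wplus W) (Wplus V)
  | false :: s, t, _, _, W, V => polarInfo_append s t (Wminus W) (Wminus V)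

theorem sum_polarInfo_append_singleton {Y : Type u} [Fintype Y] {W V : Bool → Y → ℝ}
    (hW0 : ∀ x y, 0 ≤ W x y) (hW1 : ∀ x, ∑ y, W x y = 1) (hV0 : ∀ x y, 0 ≤ V x y)
    (s : List Bool) (hpos : ∀ x z, 0 < polarChan W s x z → 0 < polarChan V s x z) :
    ∑ b, polarInfo W V (s ++ [b]) = 2 * polarInfo W V s := by
  rw [Fintype.sum_bool, add_comm, polarInfo_append, polarInfo_append]
  exact Ifun_Wminus_add_Ifun_Wplus (polarChan_nonneg s hW0) (polarChan_sum_eq_one s hW1)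
    (polarChan_nonneg s hV0) hpos

end Polar

section CoinTossing
open MeasureTheory

variable {α : Type*}

def seqPrefix (n : ℕ) (ω : ℕ → α) : Fin n → α := fun i => ω i

theorem measurable_seqPrefix [MeasurableSpace α] (n : ℕ) : Measurable (seqPrefix (α := α) n) :=
  measurable_pi_lambda _ fun _ => measurable_pi_apply _

theorem List.ofFn_snoc {n : ℕ} (w : Fin n → α) (a : α) :
    List.ofFn (Fin.snoc w a : Fin (n + 1) → α) = List.ofFn w ++ [a] := by
  rw [List.ofFn_succ_last]
  simp

variable [Fintype α]

theorem sum_snoc {M : Type*} [AddCommMonoid M] {n : ℕ} (f : (Fin (n + 1) → α) → M) :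
    ∑ v, f v = ∑ w : Fin n → α, ∑ a, f (Fin.snoc w a) := by
  rw [← (Fin.snocEquiv fun _ => α).sum_comp, Fintype.sum_prod_type, Finset.sum_comm]
  rfl

theorem sum_sum_indicator_init_snoc {n : ℕ} {g : (Fin (n + 1) → α) → ℝ} {f : (Fin n → α) → ℝ}
    (hgf : ∀ w, ∑ a, g (Fin.snoc w a) = Fintype.card α * f w) (t : Set (Fin n → α)) :
    ∑ w, ∑ a, (Fin.init ⁻¹' t).indicator g (Fin.snoc w a) =
      Fintype.card α * ∑ w, t.indicator f w := by
  rw [Finset.mul_sum]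
  refine Finset.sum_congr rfl fun w _ => ?_
  by_cases hw : w ∈ t <;> simp [hw, hgf, Fin.init_snoc]

variable [MeasurableSpace α] [MeasurableSingletonClass α]

theorem integrable_comp_seqPrefix (μ : Measure (ℕ → α)) [IsFiniteMeasure μ] {n : ℕ}
    (g : (Fin n → α) → ℝ) : Integrable (fun ω => g (seqPrefix n ω)) μ :=
  Integrable.of_finite.comp_measurable (measurable_seqPrefix n)

theorem natural_le_comap_seqPrefix (G : (n : ℕ) → (Fin n → α) → ℝ) (X : ℕ → (ℕ → α) → ℝ)
    (hX : ∀ n ω, X n ω = G n (seqPrefix n ω)) (hXm : ∀ n, StronglyMeasurable (X n)) (n : ℕ) :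
    Filtration.natural X hXm n ≤ MeasurableSpace.comap (seqPrefix n) inferInstance := by
  rw [Filtration.natural_eq_comap]
  refine MeasurableSpace.comap_le_comap_of_eq_comp
    (fun v (j : Set.Iic n) => G j (fun i => v (Fin.castLE j.2 i))) (measurable_of_countable _) ?_
  funext ω j
  exact hX j ω

variable [Nonempty α]

theorem measureReal_pi_uniform_singleton {n : ℕ} (v : Fin n → α) :
    (Measure.pi fun _ : Fin n => (PMF.uniformOfFintype α).toMeasure).real {v} =
      ((Fintype.card α : ℝ)⁻¹) ^ n := by
  rw [measureReal_def, ← Set.univ_pi_singleton v, Measure.pi_pi]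
  simp [PMF.toMeasure_apply_singleton _ _ (measurableSet_singleton _), ENNReal.toReal_inv]

theorem setIntegral_preimage_seqPrefix {μ : Measure (ℕ → α)} {n : ℕ}
    (hμ : μ.map (seqPrefix n) = Measure.pi fun _ : Fin n => (PMF.uniformOfFintype α).toMeasure)
    (g : (Fin n → α) → ℝ) (A : Set (Fin n → α)) :
    ∫ ω in seqPrefix n ⁻¹' A, g (seqPrefix n ω) ∂μ =
      ((Fintype.card α : ℝ)⁻¹) ^ n * ∑ v, A.indicator g v := by
  have hA : MeasurableSet A := A.to_countable.measurableSet
  rw [← setIntegral_map hA (measurable_of_countable g).aestronglyMeasurable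
    (measurable_seqPrefix n).aemeasurable, hμ, ← integral_indicator hA,
    integral_fintype .of_finite, Finset.mul_sum]
  simp only [measureReal_pi_uniform_singleton, smul_eq_mul]

theorem martingale_of_sum_snoc_eq (μ : Measure (ℕ → α)) [IsFiniteMeasure μ]
    (hμ : ∀ n, μ.map (seqPrefix n) = Measure.pi fun _ : Fin n => (PMF.uniformOfFintype α).toMeasure)
    (G : (n : ℕ) → (Fin n → α) → ℝ)
    (hG : ∀ n w, ∑ a, G (n + 1) (Fin.snoc w a) = Fintype.card α * G n w)
    (X : ℕ → (ℕ → α) → ℝ) (hX : ∀ n ω, X n ω = G n (seqPrefix n ω))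
    (hXm : ∀ n, StronglyMeasurable (X n)) :
    Martingale X (Filtration.natural X hXm) μ := by
  have hint : ∀ n, Integrable (X n) μ := fun n => by
    simpa only [← hX] using integrable_comp_seqPrefix μ (G n)
  refine martingale_nat (Filtration.stronglyAdapted_natural hXm) hint fun n => ?_
  refine ae_eq_condExp_of_forall_setIntegral_eq ((Filtration.natural X hXm).le n) (hint (n + 1))
    (fun _ _ _ => (hint n).integrableOn) (fun s hs _ => ?_)
    (Filtration.stronglyAdapted_natural hXm n).aestronglyMeasurable
  obtain ⟨t, -, rfl⟩ :=
    MeasurableSpace.measurableSet_comap.mp (natural_le_comap_seqPrefix G X hX hXm n s hs)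
  have hpre : seqPrefix n ⁻¹' t = seqPrefix (n + 1) ⁻¹' (Fin.init ⁻¹' t) := rfl
  have hcard : (Fintype.card α : ℝ) ≠ 0 := Nat.cast_ne_zero.mpr Fintype.card_ne_zero
  simp only [hX]
  calc ∫ ω in seqPrefix n ⁻¹' t, G n (seqPrefix n ω) ∂μ
      = ((Fintype.card α : ℝ)⁻¹) ^ n * ∑ w, t.indicator (G n) w :=
        setIntegral_preimage_seqPrefix (hμ n) (G n) t
    _ = ((Fintype.card α : ℝ)⁻¹) ^ (n + 1) *
          ∑ w, ∑ a, (Fin.init ⁻¹' t).indicator (G (n + 1)) (Fin.snoc w a) := by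
        rw [sum_sum_indicator_init_snoc (hG n), pow_succ]
        field_simp
    _ = ∫ ω in seqPrefix n ⁻¹' t, G (n + 1) (seqPrefix (n + 1) ω) ∂μ := by
        rw [hpre, setIntegral_preimage_seqPrefix (hμ _), sum_snoc]

end CoinTossing

open MeasureTheory in
theorem pair_polarization_martingale_general {Y : Type*} [Fintype Y] (W V : Bool → Y → ℝ)
    (hW0 : ∀ x y, 0 ≤ W x y) (hW1 : ∀ x, ∑ y, W x y = 1)
    (hV0 : ∀ x y, 0 ≤ V x y)
    (hpos : ∀ (s : List Bool) (x : Bool) (z : polarType Y s),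
      0 < polarChan W s x z → 0 < polarChan V s x z)
    (μ : Measure (ℕ → Bool)) [IsProbabilityMeasure μ]
    (hμ : ∀ n : ℕ,
      μ.map (fun ω (i : Fin n) => ω i) =
        Measure.pi fun _ : Fin n => (PMF.uniformOfFintype Bool).toMeasure)
    (X : ℕ → (ℕ → Bool) → ℝ)
    (hX : ∀ n ω, X n ω =
      Ifun (polarChan W (List.ofFn fun i : Fin n => ω i))
           (polarChan V (List.ofFn fun i : Fin n => ω i)))
    (hXm : ∀ n, StronglyMeasurable (X n)) :
    Martingale X (Filtration.natural X hXm) μ := by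
  refine martingale_of_sum_snoc_eq μ hμ (fun n v => polarInfo W V (List.ofFn v))
    (fun n w => ?_) X hX hXm
  simp only [List.ofFn_snoc, Fintype.card_bool, Nat.cast_ofNat]
  exact sum_polarInfo_append_singleton hW0 hW1 hV0 _ (hpos _)

open MeasureTheory in
/-- the pair polarization process `Iₙ = I(Wₙ, Vₙ)`, driven by i.i.d.
uniform signs (`true` = plus, `false` = minus) applied simultaneously to both
channels, is a martingale with respect to its natural filtration. -/
theorem pair_polarization_martingale {Y : Type*} [Fintype Y] (W V : Bool → Y → ℝ)
    (hW0 : ∀ x y, 0 ≤ W x y) (hW1 : ∀ x, ∑ y, W x y = 1)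
    (hV0 : ∀ x y, 0 ≤ V x y) (hV1 : ∀ x, ∑ y, V x y = 1)
    (hpos : ∀ (s : List Bool) (x : Bool) (z : polarType Y s),
      0 < polarChan W s x z → 0 < polarChan V s x z)
    (μ : Measure (ℕ → Bool)) [IsProbabilityMeasure μ]
    (hμ : ∀ n : ℕ,
      μ.map (fun ω (i : Fin n) => ω i) =
        Measure.pi fun _ : Fin n => (PMF.uniformOfFintype Bool).toMeasure)
    (X : ℕ → (ℕ → Bool) → ℝ)
    (hX : ∀ n ω, X n ω =
      Ifun (polarChan W (List.ofFn fun i : Fin n => ω i))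
           (polarChan V (List.ofFn fun i : Fin n => ω i)))
    (hXm : ∀ n, StronglyMeasurable (X n)) :
    Martingale X (Filtration.natural X hXm) μ :=
  pair_polarization_martingale_general W V hW0 hW1 hV0 hpos μ hμ X hX hXm

end
end

section
/- Let W = BSC(ε) with ε ∈ [0, 1/2) and V = BSC(1−ε). Then for every n and every sign sequence s ∈ {+,−}ⁿ with s ≠ ++…+, we have I(W^s, V^s) = I(W^s), and consequently (1/2ⁿ) Σ_{s∈{+,−}ⁿ} I(W^s, V^s)* ≥ I(W) − (1/2ⁿ)·1 → I(W) as n → ∞. -/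
open Finset Real

noncomputable section

/-! Flipping the input of a channel commutes with the plus transform and is absorbed by the minus
transform, and `BSC (1 - ε)` is `BSC ε` with flipped input; so `W^s = V^s` as soon as `s` contains
a minus. For the bound, the chain rule `I(W⁻) + I(W⁺) = 2 I(W)` gives `∑ₛ I(W^s) = 2ⁿ I(W)`; every
sign sequence but the all-plus one contributes `I(W^s)`, and the all-plus one loses at most
`I(W^s) ≤ 1`. -/

section InputFlip

variable {Y : Type*} (W : Bool → Y → ℝ)

theorem Wminus_comp_not : Wminus (W ∘ not) = Wminus W := by
  funext u y
  cases u <;> simp [Wminus, add_comm]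

theorem Wplus_comp_not : Wplus (W ∘ not) = Wplus W ∘ not := by
  funext u y
  cases u <;> simp [Wplus]

theorem polarChan_comp_not :
    ∀ (s : List Bool) {Y : Type*} (W : Bool → Y → ℝ),
      s ≠ List.replicate s.length true → polarChan (W ∘ not) s = polarChan W s
  | [], _, _, h => absurd rfl h
  | false :: s, _, W, _ => congrArg (polarChan · s) (Wminus_comp_not W)
  | true :: s, _, W, h => by
    simp only [polarChan, Wplus_comp_not]
    exact polarChan_comp_not s (Wplus W) fun hs => h (by simp [List.replicate_succ, ← hs])

end InputFlip

theorem BSC_one_sub (ε : ℝ) : BSC (1 - ε) = BSC ε ∘ not := by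
  funext x y
  cases x <;> cases y <;> simp [BSC]

structure IsChannel {Y : Type*} [Fintype Y] (W : Bool → Y → ℝ) : Prop where
  nonneg : ∀ x y, 0 ≤ W x y
  sum_eq_one : ∀ x, ∑ y, W x y = 1

theorem isChannel_BSC {ε : ℝ} (h₀ : 0 ≤ ε) (h₁ : ε ≤ 1) : IsChannel (BSC ε) where
  nonneg x y := by unfold BSC; split_ifs <;> linarith
  sum_eq_one x := by cases x <;> simp [BSC]

namespace IsChannel

variable {Y : Type*} [Fintype Y] {W : Bool → Y → ℝ}

theorem wminus (h : IsChannel W) : IsChannel (Wminus W) where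
  nonneg x y := sum_nonneg fun u _ => by
    have := h.nonneg (x ^^ u) y.1; have := h.nonneg u y.2; positivity
  sum_eq_one x := by
    simp only [Wminus, Fintype.sum_prod_type, Fintype.sum_bool, sum_add_distrib,
      ← sum_mul, ← mul_sum, h.sum_eq_one]
    norm_num

theorem wplus (h : IsChannel W) : IsChannel (Wplus W) where
  nonneg x y := by
    have := h.nonneg (y.2.2 ^^ x) y.1; have := h.nonneg x y.2.1
    simp only [Wplus]; positivity
  sum_eq_one x := by
    simp only [Wplus, Fintype.sum_prod_type, Fintype.sum_bool, sum_add_distrib,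
      ← sum_mul, ← mul_sum, h.sum_eq_one]
    norm_num

theorem polar : ∀ (s : List Bool) {Y : Type*} [Fintype Y] {W : Bool → Y → ℝ},
    IsChannel W → IsChannel (polarChan W s)
  | [], _, _, _, h => h
  | false :: s, _, _, _, h => IsChannel.polar s h.wminus
  | true :: s, _, _, _, h => IsChannel.polar s h.wplus

end IsChannel

theorem mul_logb_div_le_self {a q : ℝ} (ha : 0 ≤ a) (haq : a ≤ 2 * q) :
    a * logb 2 (a / q) ≤ a := by
  rcases ha.eq_or_lt with rfl | ha
  · simp
  have hq : 0 < q := by linarith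
  have : logb 2 (a / q) ≤ 1 := by
    rw [logb_le_iff_le_rpow one_lt_two (by positivity), rpow_one, div_le_iff₀ hq]
    exact haq
  nlinarith

theorem mul_logb_div_mul_add_mul_logb_div {β a b m c₁ c₂ : ℝ} (ha : 0 ≤ a) (hb : 0 ≤ b)
    (hc₁ : 0 < a → 0 < c₁) (hc₂ : 0 < b → 0 < c₂) (hm : 0 < a → 0 < b → 0 < m) :
    a * b * (logb β (m / (c₁ * c₂)) + logb β (a * b / m)) =
      a * b * (logb β (a / c₁) + logb β (b / c₂)) := by
  rcases ha.eq_or_lt with rfl | ha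
  · simp
  rcases hb.eq_or_lt with rfl | hb
  · simp
  have := hc₁ ha; have := hc₂ hb; have := hm ha hb
  rw [← logb_mul (by positivity) (by positivity), ← logb_mul (by positivity) (by positivity)]
  congr 2
  field_simp

section Information

variable {Y : Type*} {W : Bool → Y → ℝ}

def outMean (W : Bool → Y → ℝ) (y : Y) : ℝ := (1/2) * W false y + (1/2) * W true y

def infoAt (W : Bool → Y → ℝ) (y : Y) : ℝ :=
  ∑ x, (1/2) * W x y * logb 2 (W x y / outMean W y)

theorem Ifun_self_eq_sum_infoAt [Fintype Y] (W : Bool → Y → ℝ) : Ifun W W = ∑ y, infoAt W y := rfl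

theorem IsChannel.sum_outMean [Fintype Y] (h : IsChannel W) : ∑ y, outMean W y = 1 := by
  simp only [outMean, sum_add_distrib, ← mul_sum, h.sum_eq_one]
  norm_num

theorem IsChannel.Ifun_self_le_one [Fintype Y] (h : IsChannel W) : Ifun W W ≤ 1 := by
  calc Ifun W W ≤ ∑ y, ∑ x, (1/2) * W x y := by
        refine sum_le_sum fun y _ => sum_le_sum fun x _ => ?_
        rw [mul_assoc]
        refine mul_le_mul_of_nonneg_left (mul_logb_div_le_self (h.nonneg x y) ?_) (by norm_num)
        have := h.nonneg false y; have := h.nonneg true y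
        cases x <;> linarith
    _ = ∑ y, outMean W y := by simp [outMean, add_comm]
    _ = 1 := h.sum_outMean

theorem outMean_Wminus (W : Bool → Y → ℝ) (y₁ y₂ : Y) :
    outMean (Wminus W) (y₁, y₂) = outMean W y₁ * outMean W y₂ := by
  simp only [outMean, Wminus, Fintype.sum_bool, Bool.xor_true, Bool.xor_false, Bool.not_true,
    Bool.not_false]
  ring

theorem outMean_Wplus (W : Bool → Y → ℝ) (y₁ y₂ : Y) (u : Bool) :
    outMean (Wplus W) (y₁, y₂, u) = (1/2) * Wminus W u (y₁, y₂) := by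
  simp only [outMean, Wplus, Wminus, Fintype.sum_bool]
  ring

theorem sum_Wplus (W : Bool → Y → ℝ) (y₁ y₂ : Y) (u : Bool) :
    ∑ v, Wplus W v (y₁, y₂, u) = Wminus W u (y₁, y₂) := rfl

theorem outMean_pos {y : Y} (h : ∀ x, 0 ≤ W x y) {x : Bool} (hx : 0 < W x y) : 0 < outMean W y := by
  have := h false; have := h true
  cases x <;> simp only [outMean] <;> linarith

theorem Wplus_le_Wminus (h : ∀ x y, 0 ≤ W x y) (y₁ y₂ : Y) (u v : Bool) :
    Wplus W v (y₁, y₂, u) ≤ Wminus W u (y₁, y₂) := by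
  rw [← sum_Wplus]
  refine single_le_sum (f := fun v => Wplus W v (y₁, y₂, u)) (fun v _ => ?_) (mem_univ v)
  have := h (u ^^ v) y₁; have := h v y₂
  simp only [Wplus]; positivity

/-- Indexing inputs by `(x₁, x₂) = (u ⊕ v, v)`, the minus and plus log-likelihood ratios of each
input pair add up to the sum of the two single-use ones. -/
theorem infoAt_Wminus_add_sum_infoAt_Wplus (h : ∀ x y, 0 ≤ W x y) (y₁ y₂ : Y) :
    infoAt (Wminus W) (y₁, y₂) + ∑ u, infoAt (Wplus W) (y₁, y₂, u) =
      outMean W y₂ * infoAt W y₁ + outMean W y₁ * infoAt W y₂ := by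
  have hminus : infoAt (Wminus W) (y₁, y₂) = ∑ u, ∑ v, (1/2) * Wplus W v (y₁, y₂, u) *
      logb 2 (Wminus W u (y₁, y₂) / (outMean W y₁ * outMean W y₂)) := by
    refine sum_congr rfl fun u _ => ?_
    rw [← sum_mul, ← mul_sum, sum_Wplus, outMean_Wminus]
  have hplus : ∑ u, infoAt (Wplus W) (y₁, y₂, u) = ∑ u, ∑ v, (1/2) * Wplus W v (y₁, y₂, u) *
      logb 2 (Wplus W v (y₁, y₂, u) / ((1/2) * Wminus W u (y₁, y₂))) := by
    simp only [infoAt, outMean_Wplus]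
  have hterm : ∀ u v, (1/2) * Wplus W v (y₁, y₂, u) *
        logb 2 (Wminus W u (y₁, y₂) / (outMean W y₁ * outMean W y₂)) +
      (1/2) * Wplus W v (y₁, y₂, u) *
        logb 2 (Wplus W v (y₁, y₂, u) / ((1/2) * Wminus W u (y₁, y₂))) =
      (1/4) * W (u ^^ v) y₁ * W v y₂ *
        (logb 2 (W (u ^^ v) y₁ / outMean W y₁) + logb 2 (W v y₂ / outMean W y₂)) := by
    intro u v
    have key := mul_logb_div_mul_add_mul_logb_div (β := 2) (m := Wminus W u (y₁, y₂))
      (h (u ^^ v) y₁) (h v y₂) (outMean_pos (h · y₁)) (outMean_pos (h · y₂))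
      (fun ha hb => (mul_pos (mul_pos one_half_pos ha) hb).trans_le
        (Wplus_le_Wminus h y₁ y₂ u v))
    have hdiv : 1/2 * W (u ^^ v) y₁ * W v y₂ / (1/2 * Wminus W u (y₁, y₂)) =
        W (u ^^ v) y₁ * W v y₂ / Wminus W u (y₁, y₂) := by
      rw [mul_assoc, mul_div_mul_left _ _ (by norm_num)]
    simp only [Wplus]
    rw [hdiv]
    linear_combination (1/4) * key
  rw [hminus, hplus, ← sum_add_distrib]
  simp_rw [← sum_add_distrib, hterm]
  simp only [infoAt, outMean, Fintype.sum_bool, Bool.xor_true, Bool.xor_false, Bool.not_true,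
    Bool.not_false]
  ring

theorem IsChannel.Ifun_Wminus_add_Ifun_Wplus [Fintype Y] (h : IsChannel W) :
    Ifun (Wminus W) (Wminus W) + Ifun (Wplus W) (Wplus W) = 2 * Ifun W W := by
  calc _ = ∑ y₁, ∑ y₂, (infoAt (Wminus W) (y₁, y₂) + ∑ u, infoAt (Wplus W) (y₁, y₂, u)) := by
        simp only [Ifun_self_eq_sum_infoAt, Fintype.sum_prod_type, sum_add_distrib]
    _ = ∑ y₁, ∑ y₂, (outMean W y₂ * infoAt W y₁ + outMean W y₁ * infoAt W y₂) := by
        simp only [infoAt_Wminus_add_sum_infoAt_Wplus h.nonneg]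
    _ = 2 * Ifun W W := by
        simp only [sum_add_distrib, ← sum_mul, ← mul_sum, h.sum_outMean, Ifun_self_eq_sum_infoAt]
        ring

end Information

theorem List.ofFn_consEquiv {α : Type*} {n : ℕ} (a : α) (f : Fin n → α) :
    List.ofFn (Fin.consEquiv (fun _ => α) (a, f)) = a :: List.ofFn f := by
  simp [Fin.consEquiv, List.ofFn_succ]

theorem IsChannel.sum_Ifun_polarChan_ofFn (n : ℕ) :
    ∀ {Y : Type*} [Fintype Y] {W : Bool → Y → ℝ}, IsChannel W →
      ∑ s : Fin n → Bool, Ifun (polarChan W (List.ofFn s)) (polarChan W (List.ofFn s)) =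
        2 ^ n * Ifun W W := by
  induction n with
  | zero => intro Y _ W _; simp only [Fintype.sum_unique, pow_zero, one_mul]; rfl
  | succ n ih =>
    intro Y _ W h
    rw [← (Fin.consEquiv fun _ => Bool).sum_comp, Fintype.sum_prod_type, Fintype.sum_bool]
    have hcons (b : Bool) (t : Fin n → Bool) :
        Ifun (polarChan W (List.ofFn (Fin.consEquiv (fun _ => Bool) (b, t))))
          (polarChan W (List.ofFn (Fin.consEquiv (fun _ => Bool) (b, t)))) =
        Ifun (polarChan W (b :: List.ofFn t)) (polarChan W (b :: List.ofFn t)) := by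
      rw [List.ofFn_consEquiv]
    simp only [hcons]
    change ∑ t, Ifun (polarChan (Wplus W) (List.ofFn t)) (polarChan (Wplus W) (List.ofFn t)) +
      ∑ t, Ifun (polarChan (Wminus W) (List.ofFn t)) (polarChan (Wminus W) (List.ofFn t)) = _
    rw [ih h.wplus, ih h.wminus, pow_succ, mul_assoc, ← h.Ifun_Wminus_add_Ifun_Wplus]
    ring

theorem Ifun_polarChan_BSC_one_sub (ε : ℝ) {s : List Bool}
    (hs : s ≠ List.replicate s.length true) :
    Ifun (polarChan (BSC ε) s) (polarChan (BSC (1 - ε)) s) =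
      Ifun (polarChan (BSC ε) s) (polarChan (BSC ε) s) := by
  rw [BSC_one_sub, polarChan_comp_not s _ hs]

theorem Ifun_polarChan_BSC_sub_le {ε : ℝ} (h₀ : 0 ≤ ε) (h₁ : ε ≤ 1) {n : ℕ} (s : Fin n → Bool) :
    Ifun (polarChan (BSC ε) (List.ofFn s)) (polarChan (BSC ε) (List.ofFn s)) -
        (if s = fun _ => true then 1 else 0) ≤
      max (Ifun (polarChan (BSC ε) (List.ofFn s)) (polarChan (BSC (1 - ε)) (List.ofFn s))) 0 := by
  split_ifs with hs
  · have := ((isChannel_BSC h₀ h₁).polar (List.ofFn s)).Ifun_self_le_one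
    exact (sub_nonpos.2 this).trans (le_max_right _ _)
  · have hs' : List.ofFn s ≠ List.replicate (List.ofFn s).length true := by
      rwa [List.length_ofFn, ← List.ofFn_const, Ne, List.ofFn_inj]
    rw [Ifun_polarChan_BSC_one_sub ε hs', sub_zero]
    exact le_max_left _ _

/-- for `W = BSC ε` (`ε ∈ [0,1/2)`) and `V = BSC (1-ε)`,
`I(W^s, V^s) = I(W^s)` for every sign sequence `s` other than all-plus, and hence
the averaged positive parts are at least `I(W) - 2⁻ⁿ`. -/
theorem bsc_mismatched_polar_rate_bound (ε : ℝ) (hε : ε ∈ Set.Ico (0:ℝ) (1/2)) :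
    (∀ s : List Bool, s ≠ List.replicate s.length true →
      Ifun (polarChan (BSC ε) s) (polarChan (BSC (1 - ε)) s) =
        Ifun (polarChan (BSC ε) s) (polarChan (BSC ε) s)) ∧
    ∀ n : ℕ,
      (1/2)^n * ∑ s : Fin n → Bool,
          max (Ifun (polarChan (BSC ε) (List.ofFn s))
                    (polarChan (BSC (1 - ε)) (List.ofFn s))) 0
        ≥ Ifun (BSC ε) (BSC ε) - (1/2)^n := by
  obtain ⟨h₀, h₁⟩ := hε
  replace h₁ : ε ≤ 1 := by linarith
  refine ⟨fun s hs => Ifun_polarChan_BSC_one_sub ε hs, fun n => ?_⟩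
  have hsum := sum_le_sum (s := univ) fun (s : Fin n → Bool) _ =>
    Ifun_polarChan_BSC_sub_le h₀ h₁ s
  rw [sum_sub_distrib, (isChannel_BSC h₀ h₁).sum_Ifun_polarChan_ofFn,
    sum_ite_eq' univ _ fun _ => (1 : ℝ), if_pos (mem_univ _)] at hsum
  calc Ifun (BSC ε) (BSC ε) - (1/2)^n = (1/2)^n * (2^n * Ifun (BSC ε) (BSC ε) - 1) := by
        rw [mul_sub, ← mul_assoc, ← mul_pow]; norm_num
    _ ≤ _ := by gcongr

end
end
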